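/- Rational rotation numbers are attained on nondegenerate closed intervals of parameters (Arnold tongues): for every rational number p/q (p ∈ ℤ, q ≥ 1) there exist real numbers θ₁ < θ₂ such that {θ ∈ ℝ : ρ(θ) = p/q} = [θ₁, θ₂]; moreover, for every θ in this interval the map A_θ has a periodic orbit of rotation number p/q, i.e. there exists x ∈ ℝ with A_θ^{∘q}(x) = x + p. -/

import Mathlib

/-- The Arnold (standard) map lift restricted to the real line:
`A_θ(x) = x + θ + sin(2πx)/(2π)`. -/
noncomputable def arnoldR (θ : ℝ) (x : ℝ) : ℝ :=
  x + θ + Real.sin (2 * Real.pi * x) / (2 * Real.pi)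

/-!
The map `A_θ` is an increasing lift of a circle map, so the theory of translation numbers
applies: `ρ θ = τ(A_θ)`, and `τ(A_θ) = p / q` iff `A_θ^q x = x + p` for some `x`. Since `A_θ`
increases with `θ`, the set of such parameters is an interval; it is compact, because by
periodicity the point `x` can be taken in `[0, 1]`. It is not a single point: by the intermediate
value theorem every `x` satisfies `A_θ^q x = x + p` for some `θ` in it, so a one-point tongue
`{θ}` would make `A_θ^q` the translation by `p`, which is impossible since `1/2` is a critical
point of `A_θ`.
-/

open Real Set Function

section ArnoldMap

theorem hasDerivAt_arnoldR (θ x : ℝ) :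
    HasDerivAt (arnoldR θ) (1 + cos (2 * π * x)) x := by
  have h : HasDerivAt (fun y => y + θ + sin (2 * π * y) / (2 * π))
      (1 + cos (2 * π * x) * (2 * π * 1) / (2 * π)) x :=
    ((hasDerivAt_id' x).add_const θ).add
      (((hasDerivAt_id' x).const_mul (2 * π)).sin.div_const (2 * π))
  rwa [mul_one, mul_div_cancel_right₀ _ two_pi_pos.ne'] at h

theorem differentiable_arnoldR (θ : ℝ) : Differentiable ℝ (arnoldR θ) :=
  fun x => (hasDerivAt_arnoldR θ x).differentiableAt

theorem arnoldR_monotone (θ : ℝ) : Monotone (arnoldR θ) :=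
  monotone_of_deriv_nonneg (differentiable_arnoldR θ) fun x => by
    rw [(hasDerivAt_arnoldR θ x).deriv]
    linarith [neg_one_le_cos (2 * π * x)]

theorem arnoldR_add_one (θ x : ℝ) : arnoldR θ (x + 1) = arnoldR θ x + 1 := by
  simp only [arnoldR, mul_add, mul_one, sin_add_two_pi]
  ring

theorem arnoldR_le_arnoldR {θ θ' : ℝ} (h : θ ≤ θ') (x : ℝ) : arnoldR θ x ≤ arnoldR θ' x := by
  simp only [arnoldR]
  linarith

theorem abs_arnoldR_sub_le (θ x : ℝ) : |arnoldR θ x - (x + θ)| ≤ 1 := by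
  have hπ : 1 ≤ 2 * π := by linarith [pi_gt_three]
  rw [arnoldR, add_sub_cancel_left, abs_div, abs_of_pos two_pi_pos, div_le_one two_pi_pos]
  exact (abs_sin_le_one _).trans hπ

theorem continuous_iterate_arnoldR (n : ℕ) :
    Continuous fun z : ℝ × ℝ => (arnoldR z.1)^[n] z.2 := by
  have hA : Continuous fun z : ℝ × ℝ => arnoldR z.1 z.2 := by unfold arnoldR; fun_prop
  induction n with
  | zero => exact continuous_snd
  | succ n ih =>
    simp only [iterate_succ_apply']
    exact hA.comp (continuous_fst.prodMk ih)

theorem add_mul_le_iterate_arnoldR (θ x : ℝ) (n : ℕ) :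
    x + n * (θ - 1) ≤ (arnoldR θ)^[n] x := by
  have h : (· + (θ - 1)) ≤ arnoldR θ := fun y => by
    linarith [(abs_le.mp (abs_arnoldR_sub_le θ y)).1]
  simpa only [add_right_iterate_apply, nsmul_eq_mul] using
    (arnoldR_monotone θ).le_iterate_of_le h n x

theorem iterate_arnoldR_le_add_mul (θ x : ℝ) (n : ℕ) :
    (arnoldR θ)^[n] x ≤ x + n * (θ + 1) := by
  have h : arnoldR θ ≤ (· + (θ + 1)) := fun y => by
    linarith [(abs_le.mp (abs_arnoldR_sub_le θ y)).2]
  simpa only [add_right_iterate_apply, nsmul_eq_mul] using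
    (arnoldR_monotone θ).iterate_le_of_le h n x

theorem exists_iterate_arnoldR_eq_add {n : ℕ} (hn : 0 < n) (x c : ℝ) :
    ∃ θ, (arnoldR θ)^[n] x = x + c := by
  have hn' : (n : ℝ) ≠ 0 := by positivity
  have hlo : (arnoldR (c / n - 1))^[n] x ≤ x + c := by
    have := iterate_arnoldR_le_add_mul (c / n - 1) x n
    rwa [sub_add_cancel, mul_div_cancel₀ _ hn'] at this
  have hhi : x + c ≤ (arnoldR (c / n + 1))^[n] x := by
    have := add_mul_le_iterate_arnoldR (c / n + 1) x n
    rwa [add_sub_cancel_right, mul_div_cancel₀ _ hn'] at this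
  exact intermediate_value_univ _ _
    ((continuous_iterate_arnoldR n).comp (continuous_id.prodMk continuous_const)) ⟨hlo, hhi⟩

theorem iterate_arnoldR_ne_add_const {n : ℕ} (hn : 0 < n) (θ c : ℝ) :
    (arnoldR θ)^[n] ≠ (· + c) := by
  obtain ⟨m, rfl⟩ := Nat.exists_eq_succ_of_ne_zero hn.ne'
  intro h
  have hcrit : HasDerivAt (arnoldR θ) 0 (1 / 2) := by
    have hd := hasDerivAt_arnoldR θ (1 / 2)
    rwa [show 2 * π * (1 / 2) = π by ring, cos_pi, add_neg_cancel] at hd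
  have h₀ : HasDerivAt (arnoldR θ)^[m + 1] 0 (1 / 2) := by
    rw [iterate_succ]
    simpa using
      (((differentiable_arnoldR θ).iterate m _).hasDerivAt).comp (1 / 2 : ℝ) hcrit
  have h₁ : HasDerivAt (arnoldR θ)^[m + 1] 1 (1 / 2) := h ▸ (hasDerivAt_id _).add_const c
  exact zero_ne_one (h₀.unique h₁)

end ArnoldMap

section Tongue

open CircleDeg1Lift

noncomputable def arnoldLift (θ : ℝ) : CircleDeg1Lift :=
  ⟨⟨arnoldR θ, arnoldR_monotone θ⟩, arnoldR_add_one θ⟩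

@[simp]
theorem coe_arnoldLift (θ : ℝ) : ⇑(arnoldLift θ) = arnoldR θ := rfl

theorem arnoldLift_monotone : Monotone arnoldLift := fun _ _ h => arnoldR_le_arnoldR h

def arnoldTongue (r : ℝ) : Set ℝ := {θ | (arnoldLift θ).translationNumber = r}

theorem ordConnected_arnoldTongue (r : ℝ) : (arnoldTongue r).OrdConnected :=
  ordConnected_singleton.preimage_mono (translationNumber_mono.comp arnoldLift_monotone)

theorem arnoldTongue_subset_Icc (r : ℝ) : arnoldTongue r ⊆ Icc (r - 1) (r + 1) := by
  rintro θ rfl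
  have h x := abs_le.mp (abs_arnoldR_sub_le θ x)
  have hlo := (arnoldLift θ).le_translationNumber_of_add_le (z := θ - 1) fun x => by
    simp only [coe_arnoldLift]; linarith [(h x).1]
  have hhi := (arnoldLift θ).translationNumber_le_of_le_add (z := θ + 1) fun x => by
    simp only [coe_arnoldLift]; linarith [(h x).2]
  constructor <;> linarith

theorem mem_arnoldTongue_iff {q : ℕ} (hq : 0 < q) (p : ℤ) (θ : ℝ) :
    θ ∈ arnoldTongue (p / q) ↔ ∃ x, (arnoldR θ)^[q] x = x + p := by
  rw [arnoldTongue, mem_ofPred_eq,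
    translationNumber_eq_rat_iff _ (differentiable_arnoldR θ).continuous hq, coe_pow,
    coe_arnoldLift]

theorem isCompact_arnoldTongue {q : ℕ} (hq : 0 < q) (p : ℤ) :
    IsCompact (arnoldTongue (p / q)) := by
  set r : ℝ := p / q
  have hK : IsCompact
      ((Icc (r - 1) (r + 1) ×ˢ Icc 0 1) ∩ {z : ℝ × ℝ | (arnoldR z.1)^[q] z.2 = z.2 + p}) :=
    (isCompact_Icc.prod isCompact_Icc).inter_right
      (isClosed_eq (continuous_iterate_arnoldR q) (continuous_snd.add continuous_const))
  convert hK.image continuous_fst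
  ext θ
  constructor
  · intro hθ
    obtain ⟨x, hx⟩ := (mem_arnoldTongue_iff hq p θ).mp hθ
    have hfract := (arnoldLift θ ^ q).map_fract_sub_fract_eq x
    rw [coe_pow, coe_arnoldLift] at hfract
    refine ⟨(θ, Int.fract x), ⟨⟨arnoldTongue_subset_Icc r hθ, Int.fract_nonneg x,
      (Int.fract_lt_one x).le⟩, ?_⟩, rfl⟩
    simp only [mem_ofPred_eq]
    linarith
  · rintro ⟨⟨θ, x⟩, ⟨-, hx⟩, rfl⟩
    exact (mem_arnoldTongue_iff hq p θ).mpr ⟨x, hx⟩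

theorem nontrivial_arnoldTongue {q : ℕ} (hq : 0 < q) (p : ℤ) :
    (arnoldTongue (p / q)).Nontrivial := by
  rw [← not_subsingleton_iff]
  intro hsub
  obtain ⟨θ, hθ⟩ := exists_iterate_arnoldR_eq_add hq 0 p
  refine iterate_arnoldR_ne_add_const hq θ p (funext fun x => ?_)
  obtain ⟨θx, hθx⟩ := exists_iterate_arnoldR_eq_add hq x p
  rwa [hsub ((mem_arnoldTongue_iff hq p θx).mpr ⟨x, hθx⟩)
    ((mem_arnoldTongue_iff hq p θ).mpr ⟨0, hθ⟩)] at hθx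

theorem exists_arnoldTongue_eq_Icc {q : ℕ} (hq : 0 < q) (p : ℤ) :
    ∃ θ₁ θ₂, θ₁ < θ₂ ∧ arnoldTongue (p / q) = Icc θ₁ θ₂ := by
  have hnt := nontrivial_arnoldTongue hq p
  have hIcc := eq_Icc_of_connected_compact ⟨hnt.nonempty,
    (ordConnected_arnoldTongue _).isPreconnected⟩ (isCompact_arnoldTongue hq p)
  refine ⟨_, _, ?_, hIcc⟩
  by_contra! hle
  exact hnt.not_subsingleton (hIcc ▸ subsingleton_Icc_of_ge hle)

end Tongue

/-- Rational rotation numbers are attained on nondegenerate closed intervals of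
parameters (Arnold tongues): for every rational `p/q` (`p ∈ ℤ`, `q ≥ 1`) there are
`θ₁ < θ₂` with `{θ : ρ(θ) = p/q} = [θ₁, θ₂]`; moreover, for every `θ` in this interval
the map `A_θ` has a periodic orbit of rotation number `p/q`, i.e. some `x ∈ ℝ` with
`A_θ^{∘q}(x) = x + p`. -/
theorem arnold_tongues (ρ : ℝ → ℝ)
    (hρ : ∀ θ x : ℝ,
      Filter.Tendsto (fun n : ℕ => (arnoldR θ)^[n] x / n) Filter.atTop (nhds (ρ θ))) :
    ∀ (p : ℤ) (q : ℕ), 1 ≤ q →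
      ∃ θ₁ θ₂ : ℝ, θ₁ < θ₂ ∧
        {θ : ℝ | ρ θ = (p : ℝ) / (q : ℝ)} = Set.Icc θ₁ θ₂ ∧
        ∀ θ ∈ Set.Icc θ₁ θ₂, ∃ x : ℝ, (arnoldR θ)^[q] x = x + (p : ℝ) := by
  intro p q hq
  have hρτ : ∀ θ, ρ θ = (arnoldLift θ).translationNumber := fun θ =>
    ((arnoldLift θ).translationNumber_eq_of_tendsto₀ (hρ θ 0)).symm
  have hset : {θ : ℝ | ρ θ = (p : ℝ) / (q : ℝ)} = arnoldTongue (p / q) := by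
    simp only [hρτ]
    rfl
  obtain ⟨θ₁, θ₂, hlt, hIcc⟩ := exists_arnoldTongue_eq_Icc hq p
  exact ⟨θ₁, θ₂, hlt, hset.trans hIcc, fun θ hθ => (mem_arnoldTongue_iff hq p θ).mp (hIcc ▸ hθ)⟩
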